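/- Let E ⊆ ℝ^n be a finite set and let m ∈ E be a highest point of E. Assume moreover that for every i ∈ {1, …, n−1} the vector m − (e_i − e_{i+1}) belongs to E. Then {x ∈ ℝ^n : x_1 + … + x_n = 0 and ⟨m, x⟩ ≥ ⟨N, x⟩ for all N ∈ E} = {x ∈ ℝ^n : x_1 + … + x_n = 0 and x_1 ≥ x_2 ≥ … ≥ x_n}; that is, the cone C(m) restricted to the hyperplane of coordinate-sum zero equals the closed Weyl chamber. -/

import Mathlib

/-!
Pairing with `x` turns the simple root `e_i - e_{i+1}` into `x_i - x_{i+1}`. Hence if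
`x_1 ≥ … ≥ x_n`, every non-negative combination of simple roots pairs non-negatively with
`x`, so the highest point `m` maximises `⟨·, x⟩` on `E`. Conversely, if `m` maximises
`⟨·, x⟩` on `E`, comparing with `m - (e_i - e_{i+1}) ∈ E` gives `x_{i+1} ≤ x_i`.
-/

open scoped BigOperators

/-- `m` is a highest point of `E ⊆ ℝ^(n+1)`: for every `N ∈ E` the difference `m - N`
is a non-negative linear combination of the simple-root vectors `e_i - e_{i+1}`. -/
def IsHighestPoint {n : ℕ} (E : Finset (Fin (n + 1) → ℝ)) (m : Fin (n + 1) → ℝ) : Prop :=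
  ∀ N ∈ E, ∃ c : Fin n → ℝ, (∀ i, 0 ≤ c i) ∧
    m - N = ∑ i, c i • (Pi.single i.castSucc (1 : ℝ) - Pi.single i.succ (1 : ℝ))

open Matrix

section SimpleRoot

variable {R : Type*} [CommRing R] {n : ℕ}

abbrev simpleRoot (i : Fin n) : Fin (n + 1) → R :=
  Pi.single i.castSucc 1 - Pi.single i.succ 1

theorem simpleRoot_dotProduct (i : Fin n) (x : Fin (n + 1) → R) :
    simpleRoot i ⬝ᵥ x = x i.castSucc - x i.succ := by
  simp only [simpleRoot, sub_dotProduct, single_dotProduct, one_mul]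

theorem sum_smul_simpleRoot_dotProduct (c : Fin n → R) (x : Fin (n + 1) → R) :
    (∑ i, c i • simpleRoot i) ⬝ᵥ x = ∑ i, c i * (x i.castSucc - x i.succ) := by
  simp only [sum_dotProduct, smul_dotProduct, simpleRoot_dotProduct, smul_eq_mul]

end SimpleRoot

section Ordered

variable {R : Type*} [CommRing R] [PartialOrder R] [IsOrderedRing R] {n : ℕ}

theorem sum_smul_simpleRoot_dotProduct_nonneg {c : Fin n → R} (hc : ∀ i, 0 ≤ c i)
    {x : Fin (n + 1) → R} (hx : ∀ i : Fin n, x i.succ ≤ x i.castSucc) :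
    0 ≤ (∑ i, c i • simpleRoot i) ⬝ᵥ x := by
  rw [sum_smul_simpleRoot_dotProduct]
  exact Finset.sum_nonneg fun i _ => mul_nonneg (hc i) (sub_nonneg.mpr (hx i))

theorem le_of_sub_simpleRoot_dotProduct_le {m x : Fin (n + 1) → R} {i : Fin n}
    (h : (m - simpleRoot i) ⬝ᵥ x ≤ m ⬝ᵥ x) : x i.succ ≤ x i.castSucc := by
  rwa [sub_dotProduct, simpleRoot_dotProduct, sub_le_self_iff, sub_nonneg] at h

end Ordered

theorem IsHighestPoint.dotProduct_le {n : ℕ} {E : Finset (Fin (n + 1) → ℝ)}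
    {m : Fin (n + 1) → ℝ} (hhigh : IsHighestPoint E m) {N : Fin (n + 1) → ℝ} (hN : N ∈ E)
    {x : Fin (n + 1) → ℝ} (hx : ∀ i : Fin n, x i.succ ≤ x i.castSucc) :
    N ⬝ᵥ x ≤ m ⬝ᵥ x := by
  obtain ⟨c, hc, hmN⟩ := hhigh N hN
  have hpair : 0 ≤ (m - N) ⬝ᵥ x := hmN ▸ sum_smul_simpleRoot_dotProduct_nonneg hc hx
  rwa [sub_dotProduct, sub_nonneg] at hpair

theorem highest_weight_cone_eq_weyl_chamber_of_simple_roots_occur_general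
    {n : ℕ} (E : Finset (Fin (n + 1) → ℝ))
    (m : Fin (n + 1) → ℝ) (hhigh : IsHighestPoint E m)
    (hroots : ∀ i : Fin n,
      m - (Pi.single i.castSucc (1 : ℝ) - Pi.single i.succ (1 : ℝ)) ∈ E) :
    {x : Fin (n + 1) → ℝ |
        (∑ i, x i = 0) ∧ ∀ N ∈ E, ∑ i, N i * x i ≤ ∑ i, m i * x i}
      = {x : Fin (n + 1) → ℝ |
        (∑ i, x i = 0) ∧ ∀ i : Fin n, x i.succ ≤ x i.castSucc} := by
  ext x
  refine and_congr_right fun _ => ⟨fun hmax i => ?_, fun hx N hN => ?_⟩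
  · exact le_of_sub_simpleRoot_dotProduct_le (hmax _ (hroots i))
  · exact hhigh.dotProduct_le hN hx

/-- If `m ∈ E` is a highest point of `E` and every vector `m - (e_i - e_{i+1})` also
belongs to `E`, then the cone `C(m)` restricted to the hyperplane of coordinate-sum
zero is exactly the closed Weyl chamber `{x : x_1 ≥ x_2 ≥ … ≥ x_n}`. -/
theorem highest_weight_cone_eq_weyl_chamber_of_simple_roots_occur
    {n : ℕ} (E : Finset (Fin (n + 1) → ℝ))
    (m : Fin (n + 1) → ℝ) (hm : m ∈ E) (hhigh : IsHighestPoint E m)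
    (hroots : ∀ i : Fin n,
      m - (Pi.single i.castSucc (1 : ℝ) - Pi.single i.succ (1 : ℝ)) ∈ E) :
    {x : Fin (n + 1) → ℝ |
        (∑ i, x i = 0) ∧ ∀ N ∈ E, ∑ i, N i * x i ≤ ∑ i, m i * x i}
      = {x : Fin (n + 1) → ℝ |
        (∑ i, x i = 0) ∧ ∀ i : Fin n, x i.succ ≤ x i.castSucc} :=
  highest_weight_cone_eq_weyl_chamber_of_simple_roots_occur_general E m hhigh hroots
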